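/- A finite multigraph G is a cactus if and only if no two distinct vertices of G are 3-edge-connected. -/

import Mathlib

namespace TCW

/-- A multigraph: a type of vertices, a type of edges, and an incidence map
assigning to each edge its (unordered) pair of endpoints. -/
structure Multigraph (V E : Type) where
  inc : E → Sym2 V

namespace Multigraph

variable {V E : Type}

/-- The multigraph has no loops. -/
def Loopless (G : Multigraph V E) : Prop := ∀ e : E, ¬ (G.inc e).IsDiag

/-- Walks in a multigraph. -/
inductive Walk (G : Multigraph V E) : V → V → Type where
  | nil (v : V) : Walk G v v
  | cons {u v w : V} (e : E) (he : G.inc e = s(u, v)) (tail : Walk G v w) : Walk G u w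

namespace Walk

variable {G : Multigraph V E}

/-- The list of edges traversed by a walk. -/
def edges : ∀ {u v : V}, G.Walk u v → List E
  | _, _, .nil _ => []
  | _, _, .cons e _ p => e :: p.edges

/-- The list of vertices visited by a walk (in order). -/
def support : ∀ {u v : V}, G.Walk u v → List V
  | u, _, .nil _ => [u]
  | u, _, .cons _ _ p => u :: p.support

/-- A walk is a path if it visits no vertex twice. -/
def IsPath {u v : V} (p : G.Walk u v) : Prop := p.support.Nodup

/-- A closed walk is a cycle if it is nonempty, repeats no edge, and its
vertices are pairwise distinct except for the common endpoint. -/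
def IsCycle {u : V} (p : G.Walk u u) : Prop :=
  p.edges ≠ [] ∧ p.edges.Nodup ∧ p.support.tail.Nodup

end Walk

/-- Two walks are edge-disjoint if they share no edge. -/
def EdgeDisjoint {G : Multigraph V E} {u v u' v' : V}
    (p : G.Walk u v) (q : G.Walk u' v') : Prop :=
  ∀ e : E, e ∈ p.edges → e ∉ q.edges

/-- There exist three pairwise edge-disjoint paths from `u` to `v`. -/
def ThreePaths (G : Multigraph V E) (u v : V) : Prop :=
  ∃ (p₁ p₂ p₃ : G.Walk u v), p₁.IsPath ∧ p₂.IsPath ∧ p₃.IsPath ∧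
    EdgeDisjoint p₁ p₂ ∧ EdgeDisjoint p₁ p₃ ∧ EdgeDisjoint p₂ p₃

/-- `u` and `v` are 3-edge-connected: they are equal or joined by three
pairwise edge-disjoint paths. -/
def ThreeEC (G : Multigraph V E) (u v : V) : Prop := u = v ∨ ThreePaths G u v

/-- The set of edges crossing the vertex set `A` (i.e. the cut `δ(A)`). -/
def delta (G : Multigraph V E) (A : Set V) : Set E :=
  {e | ∃ x y, G.inc e = s(x, y) ∧ x ∈ A ∧ y ∉ A}

/-- The edge sets of cycles of `G`. -/
def cycleSets (G : Multigraph V E) : Set (Set E) :=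
  {C | ∃ (u : V) (p : G.Walk u u), p.IsCycle ∧ C = {e | e ∈ p.edges}}

/-- A cactus: any two distinct cycles are edge-disjoint (equivalently, every
2-connected block is a single edge or a cycle). -/
def IsCactus (G : Multigraph V E) : Prop :=
  ∀ C₁ ∈ G.cycleSets, ∀ C₂ ∈ G.cycleSets, C₁ ≠ C₂ → C₁ ∩ C₂ = ∅

/-- The quotient multigraph of `G` by a setoid on vertices: vertices are the
equivalence classes, and every edge of `G` whose endpoints lie in different
classes gives one edge; edges inside a class are discarded. -/
def quot (G : Multigraph V E) (s : Setoid V) :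
    Multigraph (Quotient s) {e : E // ¬ (Sym2.map (Quotient.mk s) (G.inc e)).IsDiag} :=
  ⟨fun e => Sym2.map (Quotient.mk s) (G.inc e.1)⟩

/-- The setoid of 3-edge-connectedness (its classes are the
3-edge-connected components). -/
def tccSetoid (G : Multigraph V E) : Setoid V := Relation.EqvGen.setoid (ThreeEC G)

/-- `H` is an immersion of `G`: vertices of `H` map injectively to vertices
of `G`, and edges of `H` map to pairwise edge-disjoint paths of `G`, the path
of an edge connecting the images of its endpoints. -/
def IsImmersion {V₁ E₁ V₂ E₂ : Type} (H : Multigraph V₁ E₁) (G : Multigraph V₂ E₂) : Prop :=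
  ∃ (f : V₁ → V₂) (P : E₁ → (u : V₂) × (v : V₂) × G.Walk u v),
    Function.Injective f ∧
    (∀ e : E₁, Sym2.map f (H.inc e) = s((P e).1, (P e).2.1)) ∧
    (∀ e : E₁, (P e).2.2.IsPath) ∧
    (∀ e₁ e₂ : E₁, e₁ ≠ e₂ → EdgeDisjoint (P e₁).2.2 (P e₂).2.2)

section Torso

variable (G : Multigraph V E) (A : Set V)

/-- Two vertices outside `A` are related if joined by a walk avoiding `A`. -/
def compRel (x y : {v : V // v ∉ A}) : Prop :=
  ∃ p : G.Walk x.1 y.1, ∀ w ∈ p.support, w ∉ A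

/-- The setoid whose classes are the connected components of `G - A`. -/
def compSetoid : Setoid {v : V // v ∉ A} := Relation.EqvGen.setoid (G.compRel A)

/-- The component `Z` of `G - A` is attached to the vertex `a ∈ A` by some edge. -/
def Attached (Z : Quotient (G.compSetoid A)) (a : {v : V // v ∈ A}) : Prop :=
  ∃ (e : E) (z : {v : V // v ∉ A}), Quotient.mk (G.compSetoid A) z = Z ∧ G.inc e = s(a.1, z.1)

/-- Edges of `G` with both endpoints in `A`, recorded together with their
endpoints as vertices of the torso. -/
def InnerE : Type :=
  {q : E × Sym2 {v : V // v ∈ A} // G.inc q.1 = Sym2.map Subtype.val q.2}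

/-- Replacement edges: one for each connected component of `G - A` having
exactly two (distinct) neighbours in `A`; its endpoints are those neighbours. -/
def RepE : Type :=
  {q : Quotient (G.compSetoid A) × Sym2 {v : V // v ∈ A} //
    ¬ q.2.IsDiag ∧ {a | a ∈ q.2} = {a | G.Attached A q.1 a}}

/-- The torso of `A` in `G`: keep the edges inside `A`, and for each
connected component of `G - A` with exactly two neighbours in `A`, add a
replacement edge between those neighbours. -/
def torso : Multigraph {v : V // v ∈ A} (G.InnerE A ⊕ G.RepE A) :=
  ⟨Sum.elim (fun q => q.1.2) (fun q => q.1.2)⟩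

end Torso

end Multigraph

open Multigraph

/-- A tree-cut decomposition of `G` with nodes `N`: a tree on `N` together
with a near-partition of the vertices of `G` into bags indexed by `N`. -/
structure TreeCutDecomp (G : Multigraph V E) (N : Type) where
  tree : SimpleGraph N
  isTree : tree.IsTree
  bag : N → Set V
  bag_disjoint : ∀ n₁ n₂ : N, n₁ ≠ n₂ → bag n₁ ∩ bag n₂ = ∅
  bag_covers : ∀ v : V, ∃ t : N, v ∈ bag t

namespace TreeCutDecomp

variable {V E N : Type} {G : Multigraph V E}

/-- The adhesion of the tree edge `n₁n₂`: all edges of `G` whose endpoints lie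
in bags of nodes in different components of the tree minus that edge. -/
def adhE (D : TreeCutDecomp G N) (n₁ n₂ : N) : Set E :=
  {e | ∃ (x y : V) (p q : N), G.inc e = s(x, y) ∧ x ∈ D.bag p ∧ y ∈ D.bag q ∧
    ¬ (D.tree.deleteEdges {s(n₁, n₂)}).Reachable p q}

/-- The adhesion of a node: the union of the adhesions of the bold
(adhesion of size at least 3) tree edges incident to it. -/
def adhN (D : TreeCutDecomp G N) (t : N) : Set E :=
  {e | ∃ n : N, D.tree.Adj n t ∧ 3 ≤ (D.adhE n t).ncard ∧ e ∈ D.adhE n t}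

/-- The decomposition has adhesion-width at most `a`. -/
def AdhWidthLE (D : TreeCutDecomp G N) (a : ℕ) : Prop := ∀ t : N, (D.adhN t).ncard ≤ a

/-- The decomposition has bag-width at most `b`. -/
def BagWidthLE (D : TreeCutDecomp G N) (b : ℕ) : Prop := ∀ t : N, (D.bag t).ncard ≤ b

/-- The adhesion-width: the maximum size of a node adhesion. -/
noncomputable def adhWidth [Fintype N] (D : TreeCutDecomp G N) : ℕ :=
  Finset.univ.sup fun t : N => (D.adhN t).ncard

/-- The bag-width: the maximum size of a bag. -/
noncomputable def bagWidth [Fintype N] (D : TreeCutDecomp G N) : ℕ :=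
  Finset.univ.sup fun t : N => (D.bag t).ncard

open Classical in
/-- GPRTW's width: the maximum over tree edges of the adhesion size, and over
nodes `t` of `|X_t|` plus the number of bold tree edges incident to `t`. -/
noncomputable def gprtwWidth [Fintype N] (D : TreeCutDecomp G N) : ℕ :=
  max
    (Finset.univ.sup fun p : N × N =>
      if D.tree.Adj p.1 p.2 then (D.adhE p.1 p.2).ncard else 0)
    (Finset.univ.sup fun t : N =>
      (D.bag t).ncard + {n : N | D.tree.Adj n t ∧ 3 ≤ (D.adhE n t).ncard}.ncard)

end TreeCutDecomp

/-- A slab in `G`: a connected subgraph (given by its vertex and edge sets)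
together with a nonempty core that is 3-edge-connected in `G`. -/
structure Slab (G : Multigraph V E) where
  verts : Set V
  edgeSet : Set E
  edge_mem : ∀ e ∈ edgeSet, ∀ x ∈ G.inc e, x ∈ verts
  conn : ∀ x ∈ verts, ∀ y ∈ verts, ∃ p : G.Walk x y,
    (∀ w ∈ p.support, w ∈ verts) ∧ (∀ e ∈ p.edges, e ∈ edgeSet)
  core : Set V
  core_sub : core ⊆ verts
  core_nonempty : core.Nonempty
  core_tec : ∀ x ∈ core, ∀ y ∈ core, ThreeEC G x y

/-- A set `F` of edges disconnects a slab if two core vertices lie in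
different components of the slab minus `F`. -/
def Slab.Disconnects {G : Multigraph V E} (F : Set E) (s : Slab G) : Prop :=
  ∃ x ∈ s.core, ∃ y ∈ s.core, ¬ ∃ p : G.Walk x y,
    (∀ w ∈ p.support, w ∈ s.verts) ∧ (∀ e ∈ p.edges, e ∈ s.edgeSet ∧ e ∉ F)

/-- A bramble: a family of pairwise touching slabs (cores pairwise intersect). -/
def IsBramble {G : Multigraph V E} (B : Set (Slab G)) : Prop :=
  ∀ s₁ ∈ B, ∀ s₂ ∈ B, (s₁.core ∩ s₂.core).Nonempty

/-- The bramble has adhesion-order at least `a`: every edge set disconnecting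
all its slabs has at least `a` edges. -/
def AdhOrderGE {G : Multigraph V E} (B : Set (Slab G)) (a : ℕ) : Prop :=
  ∀ F : Set E, (∀ s ∈ B, Slab.Disconnects F s) → a ≤ F.ncard

/-- The bramble has bag-order at least `b`: every core has at least `b` vertices. -/
def BagOrderGE {G : Multigraph V E} (B : Set (Slab G)) (b : ℕ) : Prop :=
  ∀ s ∈ B, b ≤ s.core.ncard

/-- An `(a,b)`-tangle: a consistent orientation of all edge separations of
order `< a` avoiding the collection `Σ_{a,b}` of small stars. An oriented
separation `(A, B)` is represented by its first side `A` (so `B = Aᶜ`). -/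
def IsTangle (G : Multigraph V E) (a b : ℕ) (L : Set (Set V)) : Prop :=
  (∀ A ∈ L, (G.delta A).ncard < a) ∧
  (∀ A : Set V, (G.delta A).ncard < a → (A ∈ L ↔ Aᶜ ∉ L)) ∧
  (∀ A ∈ L, ∀ C ∈ L, (Aᶜ ∩ Cᶜ).Nonempty) ∧
  (∀ σ : Set (Set V), σ ⊆ L → σ.Nonempty →
    (∀ A ∈ σ, ∀ C ∈ σ, A ≠ C → A ∩ C = ∅) →
    ¬ ((⋃ A ∈ {A ∈ σ | 3 ≤ (G.delta A).ncard}, G.delta A).ncard < a ∧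
       (⋂ A ∈ σ, Aᶜ).ncard < b))


namespace Multigraph.Walk

variable {V E : Type} {G : Multigraph V E}

@[simp] lemma edges_nil (v : V) : (nil v : G.Walk v v).edges = [] := rfl

@[simp] lemma edges_cons {u v w : V} (e : E) (he : G.inc e = s(u, v)) (p : G.Walk v w) :
    (cons e he p).edges = e :: p.edges := rfl

@[simp] lemma support_nil (v : V) : (nil v : G.Walk v v).support = [v] := rfl

@[simp] lemma support_cons {u v w : V} (e : E) (he : G.inc e = s(u, v)) (p : G.Walk v w) :
    (cons e he p).support = u :: p.support := rfl

lemma support_eq_cons {u v : V} : ∀ p : G.Walk u v, p.support = u :: p.support.tail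
  | nil _ => rfl
  | cons _ _ _ => rfl

lemma start_mem_support {u v : V} (p : G.Walk u v) : u ∈ p.support := by
  rw [support_eq_cons]; exact List.mem_cons_self

lemma end_mem_support {u v : V} : ∀ p : G.Walk u v, v ∈ p.support
  | nil _ => List.mem_singleton_self _
  | cons _ _ p => List.mem_cons_of_mem _ p.end_mem_support

lemma mem_support_of_mem_edges {u v x : V} {e : E} :
    ∀ p : G.Walk u v, e ∈ p.edges → x ∈ G.inc e → x ∈ p.support
  | nil _, he, _ => by simp at he
  | cons f hf p, he, hx => by
    rcases List.mem_cons.mp he with rfl | he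
    · rw [hf, Sym2.mem_iff] at hx
      rcases hx with rfl | rfl
      · exact List.mem_cons_self
      · exact List.mem_cons_of_mem _ p.start_mem_support
    · exact List.mem_cons_of_mem _ (mem_support_of_mem_edges p he hx)

lemma exists_mem_edges_of_ne {u v : V} (huv : u ≠ v) :
    ∀ p : G.Walk u v, ∃ e ∈ p.edges, v ∈ G.inc e
  | nil _ => absurd rfl huv
  | cons (v := w) e he p => by
    by_cases hwv : w = v
    · subst hwv
      exact ⟨e, List.mem_cons_self, he ▸ Sym2.mem_mk_right _ _⟩
    · obtain ⟨f, hf, hvf⟩ := exists_mem_edges_of_ne hwv p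
      exact ⟨f, List.mem_cons_of_mem _ hf, hvf⟩

def append {u v w : V} : G.Walk u v → G.Walk v w → G.Walk u w
  | nil _, q => q
  | cons e he p, q => cons e he (p.append q)

@[simp] lemma edges_append {u v w : V} :
    ∀ (p : G.Walk u v) (q : G.Walk v w), (p.append q).edges = p.edges ++ q.edges
  | nil _, _ => rfl
  | cons e _ p, q => congrArg (e :: ·) (edges_append p q)

@[simp] lemma support_append {u v w : V} :
    ∀ (p : G.Walk u v) (q : G.Walk v w), (p.append q).support = p.support ++ q.support.tail
  | nil _, q => q.support_eq_cons
  | cons _ _ p, q => congrArg (_ :: ·) (support_append p q)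

def reverse {u v : V} : G.Walk u v → G.Walk v u
  | nil v => nil v
  | cons e he p => p.reverse.append (cons e (he.trans Sym2.eq_swap) (nil _))

@[simp] lemma edges_reverse {u v : V} : ∀ p : G.Walk u v, p.reverse.edges = p.edges.reverse
  | nil _ => rfl
  | cons e he p => by simp [reverse, edges_reverse p]

@[simp] lemma support_reverse {u v : V} :
    ∀ p : G.Walk u v, p.reverse.support = p.support.reverse
  | nil _ => rfl
  | cons e he p => by simp [reverse, support_reverse p]

lemma exists_eq_append_of_mem_support {u v x : V} :
    ∀ p : G.Walk u v, x ∈ p.support → ∃ (p₁ : G.Walk u x) (p₂ : G.Walk x v), p = p₁.append p₂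
  | nil _, hx => by
    obtain rfl := List.mem_singleton.mp hx
    exact ⟨nil _, nil _, rfl⟩
  | cons e he p, hx => by
    rcases List.mem_cons.mp hx with rfl | hx
    · exact ⟨nil _, cons e he p, rfl⟩
    · obtain ⟨p₁, p₂, rfl⟩ := exists_eq_append_of_mem_support p hx
      exact ⟨cons e he p₁, p₂, rfl⟩

lemma exists_eq_append_cons_of_mem_edges {u v : V} {e : E} :
    ∀ p : G.Walk u v, e ∈ p.edges → ∃ (a b : V) (he : G.inc e = s(a, b))
      (p₁ : G.Walk u a) (p₂ : G.Walk b v), p = p₁.append (cons e he p₂)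
  | nil _, h => by simp at h
  | cons f hf p, h => by
    rcases List.mem_cons.mp h with rfl | h
    · exact ⟨_, _, hf, nil _, p, rfl⟩
    · obtain ⟨a, b, he, p₁, p₂, rfl⟩ := exists_eq_append_cons_of_mem_edges p h
      exact ⟨a, b, he, cons f hf p₁, p₂, rfl⟩

lemma IsPath.edges_nodup {u v : V} : ∀ {p : G.Walk u v}, p.IsPath → p.edges.Nodup
  | nil _, _ => List.nodup_nil
  | cons e he p, hp => by
    rw [IsPath, support_cons, List.nodup_cons] at hp
    refine List.nodup_cons.mpr ⟨fun hep => hp.1 ?_, IsPath.edges_nodup hp.2⟩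
    exact mem_support_of_mem_edges p hep (he ▸ Sym2.mem_mk_left _ _)

lemma IsPath.of_append_right {u v w : V} {p : G.Walk u v} {q : G.Walk v w}
    (h : (p.append q).IsPath) : q.IsPath := by
  rw [IsPath, support_append] at h
  rw [IsPath, support_eq_cons q]
  exact List.nodup_cons.mpr
    ⟨fun hv => List.disjoint_of_nodup_append h p.end_mem_support hv, h.of_append_right⟩

lemma exists_isPath_subset {u v : V} :
    ∀ p : G.Walk u v, ∃ q : G.Walk u v, q.IsPath ∧ q.edges ⊆ p.edges
  | nil u => ⟨nil u, List.nodup_singleton u, fun _ h => h⟩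
  | cons e he p => by
    obtain ⟨q, hq, hqp⟩ := exists_isPath_subset p
    by_cases hu : u ∈ q.support
    · obtain ⟨q₁, q₂, rfl⟩ := exists_eq_append_of_mem_support q hu
      refine ⟨q₂, hq.of_append_right, fun f hf => List.mem_cons_of_mem _ (hqp ?_)⟩
      simp [hf]
    · exact ⟨cons e he q, List.nodup_cons.mpr ⟨hu, hq⟩, List.cons_subset_cons _ hqp⟩

lemma IsPath.isCycle_cons {u v : V} {e : E} {he : G.inc e = s(u, v)} {p : G.Walk v u}
    (hp : p.IsPath) (hep : e ∉ p.edges) : (cons e he p).IsCycle :=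
  ⟨List.cons_ne_nil _ _, List.nodup_cons.mpr ⟨hep, hp.edges_nodup⟩, hp⟩

lemma IsCycle.exists_isPath_of_mem_edges {u : V} {c : G.Walk u u} (hc : c.IsCycle) {e : E}
    (he : e ∈ c.edges) : ∃ (a b : V) (_ : G.inc e = s(a, b)) (p : G.Walk b a),
      p.IsPath ∧ ∀ f ∈ c.edges, f = e ∨ f ∈ p.edges := by
  obtain ⟨a, b, hab, c₁, c₂, rfl⟩ := exists_eq_append_cons_of_mem_edges c he
  refine ⟨a, b, hab, c₂.append c₁, ?_, fun f hf => ?_⟩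
  · have hnodup := hc.2.2
    rw [support_append, support_eq_cons c₁] at hnodup
    rw [IsPath, support_append]
    simpa [List.nodup_append_comm] using hnodup
  · simp only [edges_append, edges_cons, List.mem_append, List.mem_cons] at hf ⊢
    tauto

lemma exists_edgeDisjoint_of_mem_support {u x y : V} {c : G.Walk u u} (hc : c.edges.Nodup)
    (hx : x ∈ c.support) (hy : y ∈ c.support) :
    ∃ q₁ q₂ : G.Walk x y, EdgeDisjoint q₁ q₂ ∧ q₁.edges ⊆ c.edges ∧ q₂.edges ⊆ c.edges := by
  obtain ⟨c₁, c₂, rfl⟩ := exists_eq_append_of_mem_support c hx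
  have hy' : y ∈ (c₂.append c₁).support := by
    rw [support_append, support_eq_cons c₁] at hy ⊢
    simp only [List.mem_append, List.mem_cons] at hy ⊢
    rcases hy with (rfl | hy) | hy
    · exact Or.inl c₂.end_mem_support
    · exact Or.inr hy
    · exact Or.inl (List.mem_of_mem_tail hy)
  obtain ⟨d₁, d₂, hd⟩ := exists_eq_append_of_mem_support _ hy'
  have hperm : (d₁.edges ++ d₂.edges).Perm (c₁.append c₂).edges := by
    rw [← edges_append, ← hd, edges_append, edges_append]
    exact List.perm_append_comm
  have hnodup := hperm.nodup_iff.mpr hc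
  refine ⟨d₁, d₂.reverse, fun f hf₁ hf₂ => ?_, fun f hf => ?_, fun f hf => ?_⟩
  · rw [edges_reverse, List.mem_reverse] at hf₂
    exact List.disjoint_of_nodup_append hnodup hf₁ hf₂
  · exact hperm.subset (List.mem_append_left _ hf)
  · rw [edges_reverse, List.mem_reverse] at hf
    exact hperm.subset (List.mem_append_right _ hf)

lemma exists_walk_avoiding {S : Set V} {D : Set E} (hD : ∀ f ∈ D, ∀ x ∈ G.inc f, x ∈ S)
    {u v : V} :
    ∀ p : G.Walk u v, v ∈ S → ∃ y ∈ S, ∃ q : G.Walk u y, (∀ f ∈ q.edges, f ∉ D) ∧ y ∈ p.support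
  | nil v, hv => ⟨v, hv, nil v, by simp, List.mem_singleton_self v⟩
  | cons e he p, hv => by
    by_cases hu : u ∈ S
    · exact ⟨u, hu, nil u, by simp, List.mem_cons_self⟩
    · obtain ⟨y, hy, q, hqD, hyp⟩ := exists_walk_avoiding hD p hv
      refine ⟨y, hy, cons e he q, fun f hf hfD => ?_, List.mem_cons_of_mem _ hyp⟩
      rcases List.mem_cons.mp hf with rfl | hf
      · exact hu (hD f hfD u (he ▸ Sym2.mem_mk_left _ _))
      · exact hqD f hf hfD

end Multigraph.Walk

namespace Multigraph

open Walk

variable {V E : Type} {G : Multigraph V E}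

lemma threePaths_of_edgeDisjoint {x y : V}
    (p₁ p₂ p₃ : G.Walk x y) (h₁₂ : EdgeDisjoint p₁ p₂) (h₁₃ : EdgeDisjoint p₁ p₃)
    (h₂₃ : EdgeDisjoint p₂ p₃) : ThreePaths G x y := by
  obtain ⟨q₁, hq₁, hqp₁⟩ := exists_isPath_subset p₁
  obtain ⟨q₂, hq₂, hqp₂⟩ := exists_isPath_subset p₂
  obtain ⟨q₃, hq₃, hqp₃⟩ := exists_isPath_subset p₃
  exact ⟨q₁, q₂, q₃, hq₁, hq₂, hq₃, fun f h₁ h₂ => h₁₂ f (hqp₁ h₁) (hqp₂ h₂),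
    fun f h₁ h₃ => h₁₃ f (hqp₁ h₁) (hqp₃ h₃), fun f h₂ h₃ => h₂₃ f (hqp₂ h₂) (hqp₃ h₃)⟩

/-- If the first path starts with the edge `e`, closing it up with either of the other two
gives two cycles through `e`. In a cactus they have the same edges, so the last edge of the
first cycle, which ends at `u`, lies on neither of the other two paths, hence on the first path
after `e`, which avoids `u`. -/
lemma IsCactus.not_threePaths (hc : G.IsCactus) {u v : V} (huv : u ≠ v) :
    ¬ ThreePaths G u v := by
  rintro ⟨p₁, p₂, p₃, h₁, -, -, d₁₂, d₁₃, d₂₃⟩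
  cases p₁ with
  | nil => exact huv rfl
  | @cons _ w _ e he t =>
    have hut : u ∉ t.support := (List.nodup_cons.mp h₁).1
    have het : e ∉ t.edges := (List.nodup_cons.mp h₁.edges_nodup).1
    have hcycle : ∀ p : G.Walk u v, EdgeDisjoint (cons e he t) p →
        ∃ π : G.Walk w u, (cons e he π).IsCycle ∧ π.edges ⊆ t.edges ++ p.edges := by
      intro p hd
      obtain ⟨π, hπ, hπsub⟩ := exists_isPath_subset (t.append p.reverse)
      simp only [edges_append, edges_reverse, List.subset_def, List.mem_append,
        List.mem_reverse] at hπsub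
      refine ⟨π, hπ.isCycle_cons fun heπ => ?_, fun f hf => List.mem_append.mpr (hπsub hf)⟩
      exact (hπsub heπ).elim het (hd e List.mem_cons_self)
    obtain ⟨π₂, hc₂, hπ₂⟩ := hcycle p₂ d₁₂
    obtain ⟨π₃, hc₃, hπ₃⟩ := hcycle p₃ d₁₃
    have hsame : {f | f ∈ (cons e he π₂).edges} = {f | f ∈ (cons e he π₃).edges} := by
      by_contra hne
      have hdisj := hc _ ⟨u, _, hc₂, rfl⟩ _ ⟨u, _, hc₃, rfl⟩ hne
      exact Set.eq_empty_iff_forall_notMem.mp hdisj e ⟨List.mem_cons_self, List.mem_cons_self⟩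
    have hwu : w ≠ u := fun hwu => hut (hwu ▸ t.start_mem_support)
    obtain ⟨f, hfπ₂, huf⟩ := exists_mem_edges_of_ne hwu π₂
    have hfπ₃ : f ∈ π₃.edges := by
      have hf : f ∈ (cons e he π₃).edges :=
        Set.ext_iff.mp hsame f |>.mp (List.mem_cons_of_mem e hfπ₂)
      rcases List.mem_cons.mp hf with rfl | hf
      · exact absurd hfπ₂ (List.nodup_cons.mp hc₂.2.1).1
      · exact hf
    have hft : f ∈ t.edges := by
      rcases List.mem_append.mp (hπ₂ hfπ₂) with hf | hf₂
      · exact hf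
      · exact (List.mem_append.mp (hπ₃ hfπ₃)).resolve_right (d₂₃ f hf₂)
    exact hut (mem_support_of_mem_edges t hft huf)

/-- If a cycle `c` shares the edge `e` with a trail `d` but also has an edge `f` off `d`, then
walking along `c - e` from `f` in both directions until `d` is first met gives a `d`-avoiding
walk between two distinct vertices of `d`, which `d` joins by two further edge-disjoint walks. -/
lemma exists_threePaths_of_isCycle {u w : V} {c : G.Walk u u} {d : G.Walk w w}
    (hc : c.IsCycle) (hd : d.edges.Nodup) {e f : E} (hec : e ∈ c.edges) (hed : e ∈ d.edges)
    (hfc : f ∈ c.edges) (hfd : f ∉ d.edges) : ∃ x y : V, x ≠ y ∧ ThreePaths G x y := by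
  obtain ⟨a, b, hab, p, hp, hcp⟩ := hc.exists_isPath_of_mem_edges hec
  have hfp : f ∈ p.edges := (hcp f hfc).resolve_left fun h => hfd (h ▸ hed)
  obtain ⟨a', b', hf, p₁, p₂, rfl⟩ := exists_eq_append_cons_of_mem_edges p hfp
  have hD : ∀ g ∈ {g | g ∈ d.edges}, ∀ x ∈ G.inc g, x ∈ {x | x ∈ d.support} :=
    fun g hg x hx => mem_support_of_mem_edges d hg hx
  have ha : a ∈ d.support := mem_support_of_mem_edges d hed (hab ▸ Sym2.mem_mk_left _ _)
  have hb : b ∈ d.support := mem_support_of_mem_edges d hed (hab ▸ Sym2.mem_mk_right _ _)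
  obtain ⟨x, hx, q₁, hq₁, hxp⟩ := exists_walk_avoiding hD p₁.reverse hb
  obtain ⟨y, hy, q₂, hq₂, hyp⟩ := exists_walk_avoiding hD p₂ ha
  have hxy : x ≠ y := by
    rintro rfl
    rw [support_reverse, List.mem_reverse] at hxp
    rw [IsPath, support_append, support_cons, List.tail_cons] at hp
    exact List.disjoint_of_nodup_append hp hxp hyp
  obtain ⟨r₁, r₂, hr, hr₁, hr₂⟩ := exists_edgeDisjoint_of_mem_support hd hx hy
  have hout : ∀ g ∈ (q₁.reverse.append (cons f hf q₂)).edges, g ∉ d.edges := by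
    simp only [edges_append, edges_reverse, edges_cons, List.mem_append, List.mem_reverse,
      List.mem_cons]
    rintro g (hg | rfl | hg)
    exacts [hq₁ g hg, hfd, hq₂ g hg]
  exact ⟨x, y, hxy, threePaths_of_edgeDisjoint _ r₁ r₂ (fun g hg hg₁ => hout g hg (hr₁ hg₁))
    (fun g hg hg₂ => hout g hg (hr₂ hg₂)) hr⟩

end Multigraph

theorem cactus_iff_no_threePaths_general {V E : Type} (G : Multigraph V E) :
    G.IsCactus ↔ ∀ u v : V, u ≠ v → ¬ ThreePaths G u v := by
  refine ⟨fun hc u v huv => hc.not_threePaths huv, fun h => ?_⟩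
  rintro _ ⟨u, c, hc, rfl⟩ _ ⟨w, d, hd, rfl⟩ hne
  by_contra hmeet
  obtain ⟨e, hec, hed⟩ := Set.nonempty_iff_ne_empty.mpr hmeet
  obtain ⟨f, hf⟩ : ∃ f, ¬ (f ∈ c.edges ↔ f ∈ d.edges) := by
    by_contra! hall
    exact hne (Set.ext hall)
  obtain ⟨x, y, hxy, hxy₃⟩ : ∃ x y : V, x ≠ y ∧ ThreePaths G x y := by
    by_cases hfc : f ∈ c.edges
    · exact exists_threePaths_of_isCycle hc hd.2.1 hec hed hfc (by tauto)
    · exact exists_threePaths_of_isCycle hd hc.2.1 hed hec (by tauto) hfc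
  exact h x y hxy hxy₃

/-- G is a cactus iff no two distinct vertices are 3-edge-connected. -/
theorem cactus_iff_no_threePaths {V E : Type} [Finite V] [Finite E]
    (G : Multigraph V E) (hG : G.Loopless) :
    G.IsCactus ↔ ∀ u v : V, u ≠ v → ¬ ThreePaths G u v :=
  cactus_iff_no_threePaths_general G

end TCW
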